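/- Let f be a probability density function on (0,∞) with finite mean, let μ be a real constant, and let g : (0,∞) → ℝ be differentiable with g·f differentiable and satisfying (g·f)′(x) = (μ − x) f(x) for all x > 0 and g(x) f(x) → 0 as x → ∞. Then for every t > 0, ∫_t^∞ x f(x) dx = μ F̄(t) + g(t) f(t); equivalently, whenever F̄(t) > 0, E(X | X > t) = μ + g(t) r(t), i.e. the mean residual life satisfies m(t) = μ − t + g(t) r(t). -/
import Mathlib


open MeasureTheory

/-- For a density `f` on `(0,∞)` with finite mean, a constant `μ`,
and a differentiable `g` with `(g·f)′(x) = (μ - x) f(x)` on `(0,∞)` and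
`g(x) f(x) → 0` as `x → ∞`, for every `t > 0`:
`∫_t^∞ x f(x) dx = μ F̄(t) + g(t) f(t)`; equivalently, whenever `F̄(t) > 0`,
`E(X | X > t) = μ + g(t) r(t)`, i.e. `m(t) = μ - t + g(t) r(t)`. -/
theorem conditional_mean_of_general_family
    (f : ℝ → ℝ) (hf_nonneg : ∀ x, 0 ≤ f x) (hf_supp : ∀ x, x ≤ 0 → f x = 0)
    (hf_int : IntegrableOn f (Set.Ioi 0)) (hf_prob : ∫ x in Set.Ioi (0 : ℝ), f x = 1)
    (hmean : IntegrableOn (fun x => x * f x) (Set.Ioi 0))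
    (μ : ℝ) (g : ℝ → ℝ) (hg : Differentiable ℝ g)
    (hgf : ∀ x, 0 < x → HasDerivAt (fun y => g y * f y) ((μ - x) * f x) x)
    (hlim : Filter.Tendsto (fun x => g x * f x) Filter.atTop (nhds 0))
    (Fbar : ℝ → ℝ) (hFbar : ∀ t, Fbar t = ∫ x in Set.Ioi t, f x)
    (r : ℝ → ℝ) (hr : ∀ t, r t = f t / Fbar t)
    (t : ℝ) (ht : 0 < t) :
    (∫ x in Set.Ioi t, x * f x) = μ * Fbar t + g t * f t ∧
      (0 < Fbar t →
        (∫ x in Set.Ioi t, x * f x) / Fbar t = μ + g t * r t ∧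
        (∫ x in Set.Ioi t, x * f x) / Fbar t - t = μ - t + g t * r t) := by
  have hsub : Set.Ioi t ⊆ Set.Ioi (0:ℝ) := fun x hx => lt_trans ht hx
  have hf_int' : IntegrableOn f (Set.Ioi t) := hf_int.mono_set hsub
  have hmean' : IntegrableOn (fun x => x * f x) (Set.Ioi t) := hmean.mono_set hsub
  have hint' : IntegrableOn (fun x => (μ - x) * f x) (Set.Ioi t) := by
    have : (fun x => (μ - x) * f x) = fun x => μ * f x - x * f x := by
      funext x; ring
    rw [this]
    exact (hf_int'.const_mul μ).sub hmean'
  have hcont : ContinuousOn (fun y => g y * f y) (Set.Ici t) := by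
    intro x hx
    exact ((hgf x (lt_of_lt_of_le ht hx)).continuousAt).continuousWithinAt
  have key : ∫ x in Set.Ioi t, (μ - x) * f x = 0 - g t * f t :=
    integral_Ioi_of_hasDerivAt_of_tendsto (hcont t Set.self_mem_Ici)
      (fun x hx => hgf x (lt_trans ht hx)) hint' hlim
  have hsplit : ∫ x in Set.Ioi t, (μ - x) * f x
      = μ * Fbar t - ∫ x in Set.Ioi t, x * f x := by
    have : (fun x => (μ - x) * f x) = fun x => μ * f x - x * f x := by
      funext x; ring
    rw [this, integral_sub (hf_int'.const_mul μ) hmean', hFbar, integral_const_mul]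
  have hmain : (∫ x in Set.Ioi t, x * f x) = μ * Fbar t + g t * f t := by
    rw [hsplit] at key; linarith
  refine ⟨hmain, fun hpos => ?_⟩
  have hne : Fbar t ≠ 0 := ne_of_gt hpos
  constructor
  · rw [hmain, hr]; field_simp <;> ring_nf
  · rw [hmain, hr]; field_simp <;> ring_nf
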